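/- Let k ≥ 0 be an integer and d = 3k + 2. There exists an integral convex polytope P ⊂ ℝ^d of dimension d whose δ-vector (δ_0, …, δ_d) satisfies δ_0 = δ_{k+1} = δ_{2k+2} = 1 and δ_j = 0 for all j ∉ {0, k+1, 2k+2}. -/

import Mathlib

open Finset MeasureTheory

/-- A point of `ℝ^N` has integer coordinates. -/
def IsLatticePt {N : ℕ} (x : Fin N → ℝ) : Prop := ∀ j, ∃ z : ℤ, x j = (z : ℝ)

/-- `P ⊂ ℝ^N` is an integral convex polytope of dimension `d`: the convex hull of a
nonempty finite set of lattice points, whose affine hull has dimension `d`. -/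
def IsIntegralPolytope (N d : ℕ) (P : Set (Fin N → ℝ)) : Prop :=
  (∃ V : Finset (Fin N → ℝ), V.Nonempty ∧ (∀ v ∈ V, IsLatticePt v) ∧
    P = convexHull ℝ (V : Set (Fin N → ℝ))) ∧
  Module.finrank ℝ (vectorSpan ℝ P) = d

/-- `i(P, n) = |nP ∩ ℤ^N|`, the number of lattice points in the `n`-th dilate of `P`. -/
noncomputable def ehrhart {N : ℕ} (P : Set (Fin N → ℝ)) (n : ℕ) : ℕ :=
  Set.ncard {x : Fin N → ℝ | x ∈ (fun p => (n : ℝ) • p) '' P ∧ IsLatticePt x}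

/-- The `i`-th entry of the δ-vector of a `d`-dimensional polytope `P`, via the
formula `δ_i = Σ_{j=0}^i (−1)^j C(d+1, j) i(P, i−j)`, which is equivalent to the
generating-function definition `(1−λ)^{d+1}(1 + Σ_{n≥1} i(P,n) λ^n) = Σ_i δ_i λ^i`. -/
noncomputable def deltaVector {N : ℕ} (d : ℕ) (P : Set (Fin N → ℝ)) (i : ℕ) : ℤ :=
  ∑ j ∈ Finset.range (i + 1),
    (-1 : ℤ) ^ j * (Nat.choose (d + 1) j : ℤ) * (ehrhart P (i - j) : ℤ)

/-! `P` is the simplex `conv {0, e_i (i ≠ o), e_o + 2·𝟙}`, the image of the standard simplex `Δ`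
of `ℝ^{d+1}` (one slack coordinate) under `μ ↦ μ|_{ℝ^d} + 2 μ_o 𝟙`. If `μ ∈ n·Δ` maps to a lattice
point, all coordinates of `μ`, including the slack one, are congruent modulo `ℤ` to one `t/3` with
`t ∈ {0, 1, 2}`; because `d + 1 = 3(k + 1)`, these `μ` are exactly `b + (t/3)·𝟙` with `b ∈ ℕ^{d+1}`
of sum `n - (k + 1)t`. Hence `i(P, n) = Σ_{t<3} C(n - (k + 1)t + d, d)`, whose generating function
is `(1 + λ^{k+1} + λ^{2k+2}) / (1 - λ)^{d+1}`. -/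

section GeneratingFunction

open PowerSeries

theorem PowerSeries.coeff_one_sub_X_pow {R : Type*} [CommRing R] (N j : ℕ) :
    coeff j ((1 - X : R⟦X⟧) ^ N) = (-1) ^ j * N.choose j := by
  have : (1 - X : R⟦X⟧) ^ N = rescale (-1) (((1 + Polynomial.X) ^ N : Polynomial R) : R⟦X⟧) := by
    simp [map_pow, rescale_X, sub_eq_add_neg]
  rw [this, coeff_rescale, Polynomial.coeff_coe, Polynomial.coeff_one_add_X_pow]

theorem PowerSeries.mk_ite_choose_eq_X_pow_mul {R : Type*} [CommRing R] (D c : ℕ) :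
    (PowerSeries.mk fun n => if c ≤ n then ((n - c + D).choose D : R) else 0) =
      X ^ c * (invOneSubPow R (D + 1)).val := by
  ext n
  rw [coeff_X_pow_mul', invOneSubPow_val_succ_eq_mk_add_choose, coeff_mk]
  simp [add_comm]

theorem deltaVector_eq_coeff {N : ℕ} (d : ℕ) (P : Set (Fin N → ℝ)) (i : ℕ) :
    deltaVector d P i =
      coeff i ((1 - X : ℤ⟦X⟧) ^ (d + 1) * PowerSeries.mk fun n => (ehrhart P n : ℤ)) := by
  rw [coeff_mul, Finset.Nat.sum_antidiagonal_eq_sum_range_succ_mk, deltaVector]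
  simp [coeff_one_sub_X_pow, coeff_mk]

theorem deltaVector_eq_of_ehrhart_eq {N : ℕ} (d : ℕ) (P : Set (Fin N → ℝ)) {ι : Type*}
    (T : Finset ι) (c : ι → ℕ)
    (h : ∀ n, (ehrhart P n : ℤ) = ∑ t ∈ T, if c t ≤ n then ((n - c t + d).choose d : ℤ) else 0)
    (i : ℕ) : deltaVector d P i = ∑ t ∈ T, if c t = i then 1 else 0 := by
  have hmk : (PowerSeries.mk fun n => (ehrhart P n : ℤ)) =
      (∑ t ∈ T, X ^ c t) * (invOneSubPow ℤ (d + 1)).val := by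
    ext n
    simp only [h, Finset.sum_mul, ← mk_ite_choose_eq_X_pow_mul, map_sum, coeff_mk]
  rw [deltaVector_eq_coeff, hmk, ← mul_assoc, ← invOneSubPow_inv_eq_one_sub_pow,
    mul_comm _ (∑ t ∈ T, _), mul_assoc, Units.inv_eq_val_inv]
  simp [coeff_X_pow, eq_comm]

end GeneratingFunction

theorem image_smul_stdSimplex {ι : Type*} [Fintype ι] [Nonempty ι] {c : ℝ} (hc : 0 ≤ c) :
    (fun p => c • p) '' stdSimplex ℝ ι = {μ | (∀ j, 0 ≤ μ j) ∧ ∑ j, μ j = c} := by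
  ext μ
  constructor
  · rintro ⟨w, ⟨hw₀, hw₁⟩, rfl⟩
    exact ⟨fun j => mul_nonneg hc (hw₀ j), by simp [← Finset.mul_sum, hw₁]⟩
  · rintro ⟨hμ₀, hμ₁⟩
    rcases hc.eq_or_lt with rfl | hc
    · classical
      obtain ⟨j⟩ := ‹Nonempty ι›
      refine ⟨Pi.single j 1, single_mem_stdSimplex ℝ j, ?_⟩
      ext i
      simp [(Finset.sum_eq_zero_iff_of_nonneg fun i _ => hμ₀ i).1 hμ₁ i (Finset.mem_univ i)]
    · refine ⟨c⁻¹ • μ, ⟨fun j => mul_nonneg (inv_nonneg.2 hc.le) (hμ₀ j), ?_⟩,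
        smul_inv_smul₀ hc.ne' μ⟩
      simp [← Finset.mul_sum, hμ₁, hc.ne']

theorem finite_subtype_sum_add_eq {ι : Type*} [Fintype ι] (c n : ℕ) :
    Finite {b : ι → ℕ // ∑ j, b j + c = n} := by
  have hle (b : {b : ι → ℕ // ∑ j, b j + c = n}) (j : ι) : b.1 j < n + 1 := by
    have := Finset.single_le_sum (fun j _ => Nat.zero_le (b.1 j)) (Finset.mem_univ j)
    have := b.2
    omega
  refine Finite.of_injective (fun b j => (⟨b.1 j, hle b j⟩ : Fin (n + 1))) fun b b' h => ?_
  ext j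
  exact congrArg Fin.val (congrFun h j)

theorem Nat.card_subtype_sum_add_eq {ι : Type*} [Fintype ι] [DecidableEq ι] (c n : ℕ) :
    Nat.card {b : Option ι → ℕ // ∑ j, b j + c = n} =
      if c ≤ n then (n - c + Fintype.card ι).choose (Fintype.card ι) else 0 := by
  split_ifs with hc
  · rw [Nat.card_congr (Equiv.subtypeEquivRight fun b => by omega :
        {b : Option ι → ℕ // ∑ j, b j + c = n} ≃ {b // ∑ j, b j = n - c}),
      ← Nat.card_congr (Sym.equivNatSumOfFintype (Option ι) (n - c)), Nat.card_eq_fintype_card,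
      Sym.card_sym_eq_choose, Fintype.card_option,
      show Fintype.card ι + 1 + (n - c) - 1 = n - c + Fintype.card ι by omega, Nat.choose_symm_add]
  · have : IsEmpty {b : Option ι → ℕ // ∑ j, b j + c = n} :=
      ⟨fun b => hc (b.2 ▸ Nat.le_add_left _ _)⟩
    exact Nat.card_of_isEmpty

namespace Equispaced

variable {N : ℕ} (o : Fin N)

def vertexMap : (Option (Fin N) → ℝ) →ₗ[ℝ] (Fin N → ℝ) where
  toFun μ i := μ (some i) + 2 * μ (some o)
  map_add' μ μ' := by ext i; simp only [Pi.add_apply]; ring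
  map_smul' c μ := by ext i; simp only [Pi.smul_apply, smul_eq_mul, RingHom.id_apply]; ring

@[simp]
lemma vertexMap_apply (μ : Option (Fin N) → ℝ) (i : Fin N) :
    vertexMap o μ i = μ (some i) + 2 * μ (some o) := rfl

noncomputable def vertices : Finset (Fin N → ℝ) :=
  Finset.univ.image fun j => vertexMap o (Pi.single j 1)

def polytope : Set (Fin N → ℝ) := convexHull ℝ (vertices o)

lemma polytope_eq_image : polytope o = vertexMap o '' stdSimplex ℝ (Option (Fin N)) := by
  rw [polytope, vertices, Finset.coe_image, Finset.coe_univ, Set.image_univ,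
    ← convexHull_rangle_single_eq_stdSimplex, LinearMap.image_convexHull, ← Set.range_comp]
  rfl

lemma mem_dilate_polytope_iff (n : ℕ) (x : Fin N → ℝ) :
    x ∈ (fun p => (n : ℝ) • p) '' polytope o ↔
      ∃ μ, (∀ j, 0 ≤ μ j) ∧ ∑ j, μ j = (n : ℝ) ∧ vertexMap o μ = x := by
  rw [polytope_eq_image, Set.image_image]
  simp_rw [← map_smul]
  rw [← Set.image_image (vertexMap o) (fun p => (n : ℝ) • p),
    image_smul_stdSimplex (Nat.cast_nonneg n)]
  simp [and_assoc]

lemma vertexMap_surjective : Function.Surjective (vertexMap o) := fun x =>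
  ⟨fun j => j.elim 0 fun i => x i - 2 * x o / 3, by ext i; simp; ring⟩

lemma vectorSpan_polytope : vectorSpan ℝ (polytope o) = ⊤ := by
  have h0 : (0 : Fin N → ℝ) ∈ vertices o :=
    Finset.mem_image.2 ⟨none, Finset.mem_univ _, by ext i; simp⟩
  rw [polytope, ← direction_affineSpan, affineSpan_convexHull, direction_affineSpan,
    vectorSpan_eq_span_vsub_set_right ℝ (Finset.mem_coe.2 h0)]
  simp only [vsub_eq_sub, sub_zero, Set.image_id', vertices, Finset.coe_image, Finset.coe_univ,
    Set.image_univ]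
  rw [show (Set.range fun j => vertexMap o (Pi.single j 1)) =
      vertexMap o '' Set.range (Pi.basisFun ℝ (Option (Fin N))) by
    rw [← Set.range_comp]; simp [Function.comp_def],
    Submodule.span_image, (Pi.basisFun ℝ _).span_eq, Submodule.map_top, LinearMap.range_eq_top]
  exact vertexMap_surjective o

lemma isIntegralPolytope : IsIntegralPolytope N N (polytope o) := by
  refine ⟨⟨vertices o, Finset.univ_nonempty.image _, ?_, rfl⟩, ?_⟩
  · simp only [vertices, Finset.mem_image, Finset.mem_univ, true_and]
    rintro _ ⟨j, rfl⟩ i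
    let e : Option (Fin N) → ℤ := Pi.single j 1
    exact ⟨e (some i) + 2 * e (some o), by simp [e, Pi.single_apply]⟩
  · rw [vectorSpan_polytope, finrank_top, Module.finrank_fin_fun]

lemma eq_of_vertexMap_eq {μ μ' : Option (Fin N) → ℝ} (h : vertexMap o μ = vertexMap o μ')
    (hsum : ∑ j, μ j = ∑ j, μ' j) : μ = μ' := by
  have ho := congrFun h o
  have hsome (i : Fin N) : μ (some i) = μ' (some i) := by
    have := congrFun h i
    simp only [vertexMap_apply] at ho this
    linarith
  have hnone : μ none = μ' none := by
    simp only [Fintype.sum_option, hsome] at hsum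
    linarith
  ext (_ | i)
  exacts [hnone, hsome i]

variable {m : ℕ}

lemma sum_add_div_three (hN : N + 1 = 3 * m) (β : Option (Fin N) → ℝ) (t : ℝ) :
    ∑ j, (β j + t / 3) = ∑ j, β j + m * t := by
  have : ((N : ℝ) + 1) = 3 * m := by exact_mod_cast hN
  rw [Finset.sum_add_distrib, Finset.sum_const, Finset.card_univ, Fintype.card_option,
    Fintype.card_fin, nsmul_eq_mul]
  push_cast
  linear_combination t / 3 * this

lemma exists_intCast_add_of_isLatticePt (hN : N + 1 = 3 * m) {n : ℕ} {μ : Option (Fin N) → ℝ}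
    (hsum : ∑ j, μ j = n) (hμ : IsLatticePt (vertexMap o μ)) :
    ∃ t : Fin 3, ∃ b : Option (Fin N) → ℤ, μ = fun j => b j + (t : ℝ) / 3 := by
  choose z hz using hμ
  simp only [vertexMap_apply] at hz
  set q := z o / 3
  let t : Fin 3 := ⟨(z o % 3).toNat, by omega⟩
  have hzo : (z o : ℝ) = 3 * q + (t : ℕ) := by
    have : z o = 3 * q + ((t : ℕ) : ℤ) := by simp [t, q]; omega
    exact_mod_cast this
  let c (i : Fin N) : ℤ := z i - 2 * q - t
  have hsome (i : Fin N) : μ (some i) = c i + (t : ℝ) / 3 := by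
    have := hz o
    push_cast [c]
    linarith [hz i]
  let b : Option (Fin N) → ℤ := fun j => j.elim (n - ∑ i, c i - m * t) c
  have htot : ∑ j, ((b j : ℝ) + (t : ℝ) / 3) = n := by
    rw [sum_add_div_three hN, Fintype.sum_option]
    simp only [b, Option.elim_none, Option.elim_some]
    push_cast
    ring
  refine ⟨t, b, funext fun j => ?_⟩
  rcases j with _ | i
  · rw [Fintype.sum_option] at hsum htot
    simp only [hsome, b, Option.elim_some] at hsum htot
    linarith
  · exact hsome i

variable (m) in
noncomputable def latticePoint (n : ℕ)
    (p : Σ t : Fin 3, {b : Option (Fin N) → ℕ // ∑ j, b j + m * t = n}) : Fin N → ℝ :=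
  vertexMap o fun j => p.2.1 j + (p.1 : ℝ) / 3

lemma latticePoint_injective (hN : N + 1 = 3 * m) (n : ℕ) :
    Function.Injective (latticePoint o m n) := by
  rintro ⟨t, b, hb⟩ ⟨t', b', hb'⟩ h
  have hsum (s : Fin 3) (c : Option (Fin N) → ℕ) (hc : ∑ j, c j + m * s = n) :
      ∑ j, ((c j : ℝ) + (s : ℝ) / 3) = n := by
    rw [sum_add_div_three hN]
    exact_mod_cast hc
  have hμ := eq_of_vertexMap_eq o h ((hsum t b hb).trans (hsum t' b' hb').symm)
  have key (j : Option (Fin N)) : 3 * b j + t = 3 * b' j + t' := by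
    have := congrFun hμ j
    exact_mod_cast (by linarith : (3 * b j + t : ℝ) = 3 * b' j + t')
  obtain rfl : t = t' := Fin.ext (by have := key none; omega)
  obtain rfl : b = b' := funext fun j => by have := key j; omega
  rfl

lemma range_latticePoint (hN : N + 1 = 3 * m) (n : ℕ) :
    Set.range (latticePoint o m n) =
      {x | x ∈ (fun p => (n : ℝ) • p) '' polytope o ∧ IsLatticePt x} := by
  ext x
  simp only [Set.mem_ofPred_eq, mem_dilate_polytope_iff]
  constructor
  · rintro ⟨⟨t, b, hb⟩, rfl⟩
    refine ⟨⟨_, fun j => by positivity, ?_, rfl⟩, fun i => ⟨b (some i) + 2 * b (some o) + t, ?_⟩⟩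
    · rw [sum_add_div_three hN]
      exact_mod_cast hb
    · simp only [latticePoint, vertexMap_apply]
      push_cast
      ring
  · rintro ⟨⟨μ, hμ₀, hμ, rfl⟩, hlat⟩
    obtain ⟨t, b, rfl⟩ := exists_intCast_add_of_isLatticePt o hN hμ hlat
    have hb (j : Option (Fin N)) : 0 ≤ b j := by
      have := hμ₀ j
      have : (t : ℝ) < 3 := by exact_mod_cast t.isLt
      have : (-1 : ℝ) < b j := by linarith
      have : (-1 : ℤ) < b j := by exact_mod_cast this
      omega
    have hcast (j : Option (Fin N)) : (((b j).toNat : ℕ) : ℝ) = b j := by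
      exact_mod_cast Int.toNat_of_nonneg (hb j)
    refine ⟨⟨t, fun j => (b j).toNat, ?_⟩, ?_⟩
    · rw [sum_add_div_three hN] at hμ
      have : ∑ j, b j + m * t = n := by exact_mod_cast hμ
      zify
      simpa [Int.toNat_of_nonneg (hb _)] using this
    · simp only [latticePoint, hcast]

lemma ehrhart_polytope (hN : N + 1 = 3 * m) (n : ℕ) :
    ehrhart (polytope o) n =
      ∑ t ∈ Finset.range 3, if m * t ≤ n then (n - m * t + N).choose N else 0 := by
  have (t : Fin 3) := finite_subtype_sum_add_eq (ι := Option (Fin N)) (m * t) n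
  rw [ehrhart, ← range_latticePoint o hN, Set.ncard_range_of_injective
    (latticePoint_injective o hN n), Nat.card_sigma, ← Fin.sum_univ_eq_sum_range]
  simp only [Nat.card_subtype_sum_add_eq, Fintype.card_fin]

end Equispaced

/-- **Lemma 3.1.** For `d = 3k + 2` there exists an integral convex polytope
`P ⊂ ℝ^d` of dimension `d` with `δ_0 = δ_{k+1} = δ_{2k+2} = 1` and all other
entries of its δ-vector equal to `0`. -/
theorem exists_polytope_delta_equispaced
    (k d : ℕ) (hd : d = 3 * k + 2) :
    ∃ P : Set (Fin d → ℝ), IsIntegralPolytope d d P ∧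
      deltaVector d P 0 = 1 ∧
      deltaVector d P (k + 1) = 1 ∧
      deltaVector d P (2 * k + 2) = 1 ∧
      ∀ j ≤ d, j ≠ 0 → j ≠ k + 1 → j ≠ 2 * k + 2 → deltaVector d P j = 0 := by
  subst hd
  have hδ (i : ℕ) : deltaVector (3 * k + 2) (Equispaced.polytope (0 : Fin (3 * k + 2))) i =
      ∑ t ∈ Finset.range 3, if (k + 1) * t = i then 1 else 0 :=
    deltaVector_eq_of_ehrhart_eq _ _ _ _
      (fun n => by exact_mod_cast Equispaced.ehrhart_polytope (m := k + 1) 0 (by ring) n) i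
  refine ⟨Equispaced.polytope 0, Equispaced.isIntegralPolytope 0, ?_, ?_, ?_,
    fun j _ h0 h1 h2 => ?_⟩ <;>
    simp only [hδ, Finset.sum_range_succ, Finset.sum_range_zero] <;> split_ifs <;>
    first | omega | contradiction
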